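/- arXiv:1906.00995 — 4 statements merged into one kernel-verified Lean document; each statement's English description precedes it below -/
import Mathlib

section
/- Every real reduced multiring is a quadratically tuned multiring; i.e., if A is a multiring with −1 ∉ ΣA² satisfying a³ = a, a + ab² = {a}, and a² + b² a singleton for all a, b ∈ A, then A satisfies axioms QT0–QT5. -/
/-! # Multirings (Marshall) -/

universe u v

/-- A multiring in the sense of Marshall: a commutative monoid under `mul` with a
multivalued addition `add : A → A → Set A`. -/
structure Multiring (A : Type u) where
  add : A → A → Set A
  mul : A → A → A
  neg : A → A
  zero : A
  one : A
  add_nonempty : ∀ a b : A, (add a b).Nonempty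
  add_comm' : ∀ a b : A, add a b = add b a
  add_assoc' : ∀ a b c : A, (⋃ x ∈ add b c, add a x) = ⋃ y ∈ add a b, add y c
  add_zero' : ∀ a : A, add a zero = {a}
  zero_mem_add_neg : ∀ a : A, zero ∈ add a (neg a)
  neg_unique : ∀ a b : A, zero ∈ add a b → b = neg a
  mem_add_reverse : ∀ a b c : A, c ∈ add a b → a ∈ add c (neg b)
  mul_comm' : ∀ a b : A, mul a b = mul b a
  mul_assoc' : ∀ a b c : A, mul (mul a b) c = mul a (mul b c)
  mul_one' : ∀ a : A, mul a one = a
  mul_zero' : ∀ a : A, mul a zero = zero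
  mul_mem_add : ∀ d a b c : A, c ∈ add a b → mul d c ∈ add (mul d a) (mul d b)

namespace Multiring

variable {A : Type u} {B : Type v}

/-- `M.SumSq x` : `x` belongs to some finite multivalued sum of squares of `A`. -/
inductive SumSq (M : Multiring A) : A → Prop
  | sq : ∀ a : A, SumSq M (M.mul a a)
  | step : ∀ a b c : A, SumSq M b → c ∈ M.add (M.mul a a) b → SumSq M c

/-- A real reduced multiring: `−1 ∉ ΣA²`, `a³ = a`, `a + ab² = {a}`, and
`a² + b²` is a singleton. -/
def IsRealReduced (M : Multiring A) : Prop :=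
  ¬ M.SumSq (M.neg M.one) ∧
  (∀ a : A, M.mul a (M.mul a a) = a) ∧
  (∀ a b : A, M.add a (M.mul a (M.mul b b)) = {a}) ∧
  (∀ a b : A, ∃! c : A, c ∈ M.add (M.mul a a) (M.mul b b))

/-- Quadratically tuned multiring: axioms QT0–QT5. -/
def IsQT (M : Multiring A) : Prop :=
  -- QT0
  (∀ a : A, M.mul a (M.mul a a) = a) ∧
  -- QT1
  (∀ a : A, M.one ∈ M.add M.one a) ∧
  -- QT2
  (∀ a b c d e : A, M.mul a d = M.mul b d → M.mul a e = M.mul b e →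
    c ∈ M.add (M.mul (M.mul c c) d) (M.mul (M.mul c c) e) → M.mul a c = M.mul b c) ∧
  -- QT3
  (∀ a b c d e : A,
    e ∈ M.add (M.mul (M.mul (M.mul c e) (M.mul c e)) a)
              (M.mul (M.mul (M.mul d e) (M.mul d e)) b) →
    e ∈ M.add (M.mul (M.mul e e) a) (M.mul (M.mul e e) b)) ∧
  -- QT4
  (∀ a b c : A, a ∈ M.add (M.mul (M.mul a a) b) (M.mul (M.mul a a) c) →
    M.mul a a ∈ M.add (M.mul (M.mul a b) (M.mul a b)) (M.mul (M.mul a c) (M.mul a c))) ∧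
  -- QT5
  (∀ a b e : A, e ∈ M.add a b ↔
    (e ∈ M.add (M.mul a (M.mul e e)) (M.mul b (M.mul e e)) ∧
     M.neg a ∈ M.add (M.mul b (M.mul a a)) (M.neg (M.mul e (M.mul a a))) ∧
     M.neg b ∈ M.add (M.mul a (M.mul b b)) (M.neg (M.mul e (M.mul b b)))))

/-- Morphism of multirings. -/
def IsHom (M : Multiring A) (N : Multiring B) (f : A → B) : Prop :=
  f M.zero = N.zero ∧ f M.one = N.one ∧
  (∀ a : A, f (M.neg a) = N.neg (f a)) ∧
  (∀ a b : A, f (M.mul a b) = N.mul (f a) (f b)) ∧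
  (∀ a b c : A, c ∈ M.add a b → f c ∈ N.add (f a) (f b))

/-- Isomorphism of multirings: a bijective morphism whose inverse is also a morphism. -/
def IsIso (M : Multiring A) (N : Multiring B) (f : A → B) : Prop :=
  IsHom M N f ∧ ∃ g : B → A, IsHom N M g ∧ (∀ a, g (f a) = a) ∧ (∀ b, f (g b) = b)

end Multiring

/-! ## The multifield `Q₂ = {−1,0,1}` (realized on `SignType`) -/

/-- Multivalued addition of `Q₂`: `a+0={a}`, `1+1={1}`, `(−1)+(−1)={−1}`,
`1+(−1)={−1,0,1}`. -/
def Q2add (a b : SignType) : Set SignType :=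
  if a = 0 then {b} else if b = 0 then {a} else if a = b then {a} else Set.univ

namespace Multiring

variable {A : Type u}

/-- A point of the real spectrum: a multiring morphism `σ : A → Q₂`. -/
def IsSperMap (M : Multiring A) (σ : A → SignType) : Prop :=
  σ M.zero = 0 ∧ σ M.one = 1 ∧
  (∀ a : A, σ (M.neg a) = -σ a) ∧
  (∀ a b : A, σ (M.mul a b) = σ a * σ b) ∧
  (∀ a b c : A, c ∈ M.add a b → σ c ∈ Q2add (σ a) (σ b))

/-- `Sper(A)`, the real spectrum of the multiring `A`. -/
def Sper (M : Multiring A) : Type u := {σ : A → SignType // M.IsSperMap σ}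

/-- A preordering of a multiring. -/
def IsPreordering (M : Multiring A) (T : Set A) : Prop :=
  (∀ a ∈ T, ∀ b ∈ T, M.add a b ⊆ T) ∧
  (∀ a ∈ T, ∀ b ∈ T, M.mul a b ∈ T) ∧
  (∀ a : A, M.mul a a ∈ T)

/-- `X_T = {σ ∈ Sper(A) : σ(t) ∈ {0,1} for all t ∈ T}`. -/
def XT (M : Multiring A) (T : Set A) : Type u :=
  {σ : A → SignType // M.IsSperMap σ ∧ ∀ t ∈ T, σ t = 0 ∨ σ t = 1}

/-- The evaluation map `a ↦ ā`, `ā(σ) = σ(a)`, into `Q₂^{X_T}`. -/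
def evalT (M : Multiring A) (T : Set A) (a : A) : XT M T → SignType :=
  fun σ => σ.1 a

/-- The carrier of `Q_T(A)`: the image of `A` in `Q₂^{X_T}`. -/
def QTcar (M : Multiring A) (T : Set A) : Set (XT M T → SignType) :=
  Set.range (evalT M T)

/-- The evaluation map `a ↦ ā` viewed as a map onto `Q_T(A)`. -/
def evalQ (M : Multiring A) (T : Set A) (a : A) : QTcar M T :=
  ⟨evalT M T a, a, rfl⟩

/-- Evaluation `a ↦ â` into `Q₂^{Sper(A)}`. -/
def hat (M : Multiring A) (a : A) : M.Sper → SignType := fun σ => σ.1 a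

end Multiring

/-! ## Abstract real spectra -/

/-- Representation: `D(a,b)` for a set `G` of functions `X → {−1,0,1}`. -/
def Dfun {X : Type u} (G : Set (X → SignType)) (a b : X → SignType) : Set (X → SignType) :=
  {c | c ∈ G ∧ ∀ x : X, 0 < a x * c x ∨ 0 < b x * c x ∨ c x = 0}

/-- Transversal representation `Dᵗ(a,b)`. -/
def Dtfun {X : Type u} (G : Set (X → SignType)) (a b : X → SignType) : Set (X → SignType) :=
  {c | c ∈ G ∧ ∀ x : X, 0 < a x * c x ∨ 0 < b x * c x ∨ (c x = 0 ∧ b x = -a x)}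

/-- An abstract real spectrum (space of signs) on a set `X`. -/
structure ARS (X : Type u) where
  G : Set (X → SignType)
  nonemptyX : Nonempty X
  one_mem : (fun _ => (1 : SignType)) ∈ G
  zero_mem : (fun _ => (0 : SignType)) ∈ G
  negOne_mem : (fun _ => (-1 : SignType)) ∈ G
  mul_mem : ∀ {a b : X → SignType}, a ∈ G → b ∈ G → (fun x => a x * b x) ∈ G
  separates : ∀ x y : X, x ≠ y → ∃ a ∈ G, a x ≠ a y
  ax2 : ∀ P : Set (X → SignType), P ⊆ G → (fun _ => (1 : SignType)) ∈ P →
    (∀ {a b : X → SignType}, a ∈ P → b ∈ P → (fun x => a x * b x) ∈ P) →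
    (∀ a ∈ G, a ∈ P ∨ (fun x => -(a x)) ∈ P) →
    (fun _ => (-1 : SignType)) ∉ P →
    (∀ {a b : X → SignType}, a ∈ P → b ∈ P → Dfun G a b ⊆ P) →
    (∀ {a b : X → SignType}, a ∈ G → b ∈ G →
      (fun x => a x * b x) ∈ P → (fun x => -(a x * b x)) ∈ P →
      (a ∈ P ∧ (fun x => -(a x)) ∈ P) ∨ (b ∈ P ∧ (fun x => -(b x)) ∈ P)) →
    ∃! x : X, P = {a | a ∈ G ∧ a x ≤ 0}
  ax3a : ∀ a b c p q : X → SignType, a ∈ G → b ∈ G → c ∈ G →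
    q ∈ Dfun G b c → p ∈ Dfun G a q → ∃ r ∈ Dfun G a b, p ∈ Dfun G r c
  ax3b : ∀ a b : X → SignType, a ∈ G → b ∈ G → (Dtfun G a b).Nonempty

/-! ## Ternary semigroups, real semigroups and pre-real semigroups -/

/-- The raw data of a ternary structure with a ternary relation `D`
(`D a b c` means `a ∈ D(b,c)`). -/
structure TernaryStruct (G : Type u) where
  mul : G → G → G
  one : G
  zero : G
  negOne : G
  D : G → G → G → Prop

namespace TernaryStruct

variable {G : Type u}

def neg (S : TernaryStruct G) (a : G) : G := S.mul S.negOne a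

/-- Transversal representation: `a ∈ Dᵗ(b,c) ⟺ a ∈ D(b,c) ∧ −b ∈ D(−a,c) ∧ −c ∈ D(b,−a)`. -/
def Dt (S : TernaryStruct G) (a b c : G) : Prop :=
  S.D a b c ∧ S.D (S.neg b) (S.neg a) c ∧ S.D (S.neg c) b (S.neg a)

end TernaryStruct

/-- Axioms of a ternary semigroup together with [RS0]-[RS6] and [RS8]. -/
structure PreRealSemigroupAux (G : Type u) extends TernaryStruct G where
  mul_comm' : ∀ a b : G, mul a b = mul b a
  mul_assoc' : ∀ a b c : G, mul (mul a b) c = mul a (mul b c)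
  mul_one' : ∀ a : G, mul a one = a
  cube : ∀ a : G, mul a (mul a a) = a
  negOne_ne_one : negOne ≠ one
  negOne_mul_negOne : mul negOne negOne = one
  mul_zero' : ∀ a : G, mul a zero = zero
  neg_fix : ∀ a : G, mul negOne a = a → a = zero
  rs0 : ∀ a b c : G, D c a b ↔ D c b a
  rs1 : ∀ a b : G, D a a b
  rs2 : ∀ a b c d : G, D a b c → D (mul a d) (mul b d) (mul c d)
  rs3 : ∀ a b c d e : G, toTernaryStruct.Dt a b c → toTernaryStruct.Dt c d e →
    ∃ x : G, toTernaryStruct.Dt x b d ∧ toTernaryStruct.Dt a x e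
  rs4 : ∀ a b c d e : G, D e (mul (mul c c) a) (mul (mul d d) b) → D e a b
  rs5 : ∀ a b c d e : G, mul a d = mul b d → mul a e = mul b e → D c d e → mul a c = mul b c
  rs6 : ∀ a b c : G, D c a b →
    toTernaryStruct.Dt c (mul (mul c c) a) (mul (mul c c) b)
  rs8 : ∀ a b c : G, D a b c → D (mul a a) (mul b b) (mul c c)

/-- A real semigroup: [RS0]-[RS8]. -/
structure RealSemigroup (G : Type u) extends PreRealSemigroupAux G where
  rs7 : ∀ a b x : G, toTernaryStruct.Dt x a (toTernaryStruct.neg b) →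
    toTernaryStruct.Dt x b (toTernaryStruct.neg a) → a = b

/-- A pre-real semigroup: [RS0]-[RS6], [RS8] and [RS7']. -/
structure PreRealSemigroup (G : Type u) extends PreRealSemigroupAux G where
  rs7' : ∀ x a : G, toTernaryStruct.Dt x zero a ↔ x = a

/-- Morphism of pre-real semigroups: preserves `·`, `1`, `0`, `−1` and `D`. -/
def IsPRSHom {G : Type u} {H : Type v} (S : PreRealSemigroup G) (T : PreRealSemigroup H)
    (f : G → H) : Prop :=
  f S.one = T.one ∧ f S.zero = T.zero ∧ f S.negOne = T.negOne ∧
  (∀ a b : G, f (S.mul a b) = T.mul (f a) (f b)) ∧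
  (∀ a b c : G, S.D a b c → T.D (f a) (f b) (f c))

/-! ## Quadratic forms and isometry -/

/-- Weak isometry of forms (as lists of entries) over a multiring. -/
inductive WeakIsom {A : Type u} (M : Multiring A) : List A → List A → Prop
  | one (a : A) : WeakIsom M [a] [a]
  | two (a b c d : A) : M.mul a b = M.mul c d → (M.add a b ∩ M.add c d).Nonempty →
      WeakIsom M [a, b] [c, d]
  | step (a₁ b₁ x y : A) (as bs zs : List A) :
      2 ≤ as.length → as.length = bs.length → zs.length + 1 = as.length →
      WeakIsom M [a₁, x] [b₁, y] → WeakIsom M as (x :: zs) → WeakIsom M bs (y :: zs) →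
      WeakIsom M (a₁ :: as) (b₁ :: bs)

/-- Strong isometry of forms (as lists of entries) over a multiring. -/
inductive StrongIsom {A : Type u} (M : Multiring A) : List A → List A → Prop
  | one (a : A) : StrongIsom M [a] [a]
  | two (a b c d : A) : M.mul a b = M.mul c d → M.add a b = M.add c d →
      StrongIsom M [a, b] [c, d]
  | step (a₁ b₁ x y : A) (as bs zs : List A) :
      2 ≤ as.length → as.length = bs.length → zs.length + 1 = as.length →
      StrongIsom M [a₁, x] [b₁, y] → StrongIsom M as (x :: zs) → StrongIsom M bs (y :: zs) →
      StrongIsom M (a₁ :: as) (b₁ :: bs)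


/-!
In a real reduced multiring a sum of squares `p² + q²` is a single element `m`, and `m` acts
as the identity on every `c ∈ p + q`: expanding `c² ∈ (p + q)²` gives `c² ∈ m + pq`, while
`pq ∈ m - m` because `pq · m = pq` and `1 - 1` is everything; hence `m ∈ c² + m`, which
forces `c² m = c²` and so `c m = c`. Consequently `c ∈ c p² + c q²`, and every sum
`y d² + y e²` is the single element `y m`. With `1 ∈ 1 + a` and `a + a b² = {a}` used to
absorb summands, each of QT1–QT5 follows by multiplying the given membership by a suitable
element and regrouping.
-/

namespace Multiring

variable {A : Type u} (M : Multiring A)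

def IsTripotent : Prop := ∀ a : A, M.mul a (M.mul a a) = a

def AddMulSqAbsorb : Prop := ∀ a b : A, M.add a (M.mul a (M.mul b b)) = {a}

def SqAddSqUnique : Prop := ∀ a b : A, ∃! c : A, c ∈ M.add (M.mul a a) (M.mul b b)

theorem mul_left_comm (a b c : A) : M.mul a (M.mul b c) = M.mul b (M.mul a c) := by
  rw [← M.mul_assoc', M.mul_comm' a b, M.mul_assoc']

theorem one_mul (a : A) : M.mul M.one a = a := by
  rw [M.mul_comm', M.mul_one']

theorem neg_neg (a : A) : M.neg (M.neg a) = a :=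
  (M.neg_unique _ _ (by rw [M.add_comm']; exact M.zero_mem_add_neg a)).symm

theorem mul_neg (d a : A) : M.mul d (M.neg a) = M.neg (M.mul d a) := by
  have h := M.mul_mem_add d a (M.neg a) M.zero (M.zero_mem_add_neg a)
  rw [M.mul_zero'] at h
  exact M.neg_unique _ _ h

variable {M}

theorem IsTripotent.mul_mul_mul (hcube : M.IsTripotent) (a x : A) :
    M.mul a (M.mul a (M.mul a x)) = M.mul a x := by
  rw [← M.mul_assoc', ← M.mul_assoc', M.mul_assoc' a a a, hcube]

theorem mem_add_reverse' {a b c : A} (h : c ∈ M.add a b) : b ∈ M.add c (M.neg a) :=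
  M.mem_add_reverse b a c (by rwa [M.add_comm'] at h)

theorem mem_add_of_mem_add_neg {a b c : A} (h : c ∈ M.add a (M.neg b)) : a ∈ M.add c b := by
  simpa only [M.neg_neg] using M.mem_add_reverse _ _ _ h

theorem exists_mem_add_assoc {a b d t x : A} (ht : t ∈ M.add a x) (hx : x ∈ M.add b d) :
    ∃ y ∈ M.add a b, t ∈ M.add y d := by
  have h : t ∈ ⋃ x ∈ M.add b d, M.add a x := Set.mem_biUnion hx ht
  rw [M.add_assoc'] at h
  simpa only [Set.mem_iUnion, exists_prop] using h

theorem exists_mem_add_assoc' {a b d t y : A} (ht : t ∈ M.add y d) (hy : y ∈ M.add a b) :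
    ∃ x ∈ M.add b d, t ∈ M.add a x := by
  have h : t ∈ ⋃ y ∈ M.add a b, M.add y d := Set.mem_biUnion hy ht
  rw [← M.add_assoc'] at h
  simpa only [Set.mem_iUnion, exists_prop] using h

theorem mul_mem_add_of_eq {a b c d a' b' c' : A} (h : c ∈ M.add a b)
    (ha : M.mul d a = a') (hb : M.mul d b = b') (hc : M.mul d c = c') : c' ∈ M.add a' b' := by
  subst ha hb hc
  exact M.mul_mem_add d a b c h

theorem add_self (habs : M.AddMulSqAbsorb) (a : A) : M.add a a = {a} := by
  simpa only [M.mul_one'] using habs a M.one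

theorem one_add_sq (habs : M.AddMulSqAbsorb) (a : A) : M.add M.one (M.mul a a) = {M.one} := by
  simpa only [M.one_mul] using habs M.one a

theorem sq_mem_one_add (habs : M.AddMulSqAbsorb) {x z : A} (hz : z ∈ M.add x (M.neg M.one)) :
    M.mul x x ∈ M.add M.one z := by
  have hx : x ∈ M.add M.one z := by rw [M.add_comm']; exact mem_add_of_mem_add_neg hz
  have hxx : M.mul x x ∈ M.add x (M.mul x z) := mul_mem_add_of_eq hx (M.mul_one' x) rfl rfl
  have hxz : M.mul x z ∈ M.add z (M.mul z z) :=
    mul_mem_add_of_eq hx (M.mul_one' z) rfl (M.mul_comm' z x)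
  -- `x² ∈ (1 + z) + (z + z²) ⊆ 1 + ((z + z) + z²) = 1 + (z + z²) ⊆ (1 + z²) + z = 1 + z`
  obtain ⟨p, hp, hxp⟩ := exists_mem_add_assoc' hxx hx
  obtain ⟨y, hy, hpy⟩ := exists_mem_add_assoc hp hxz
  rw [add_self habs, Set.mem_singleton_iff] at hy
  subst hy
  obtain ⟨w, hw, hxw⟩ := exists_mem_add_assoc hxp (by rwa [M.add_comm'] at hpy)
  rw [one_add_sq habs, Set.mem_singleton_iff] at hw
  rwa [hw] at hxw

theorem mem_one_add_neg_one (habs : M.AddMulSqAbsorb) (a : A) :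
    a ∈ M.add M.one (M.neg M.one) := by
  obtain ⟨z, hz⟩ := M.add_nonempty a (M.neg M.one)
  have ha : a ∈ M.add M.one z := by rw [M.add_comm']; exact mem_add_of_mem_add_neg hz
  obtain ⟨y, hy, hay⟩ := exists_mem_add_assoc ha (mem_add_reverse' (sq_mem_one_add habs hz))
  rw [one_add_sq habs, Set.mem_singleton_iff] at hy
  rwa [hy] at hay

theorem one_mem_one_add (habs : M.AddMulSqAbsorb) (a : A) : M.one ∈ M.add M.one a := by
  rw [M.add_comm']
  exact mem_add_of_mem_add_neg (mem_one_add_neg_one habs a)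

theorem mem_add_mul (habs : M.AddMulSqAbsorb) (e x : A) : e ∈ M.add e (M.mul e x) :=
  mul_mem_add_of_eq (one_mem_one_add habs x) (M.mul_one' e) rfl (M.mul_one' e)

theorem mem_add_neg_self (habs : M.AddMulSqAbsorb) {m x : A} (h : M.mul m x = x) :
    x ∈ M.add m (M.neg m) :=
  mul_mem_add_of_eq (mem_one_add_neg_one habs x) (M.mul_one' m)
    (by rw [M.mul_neg, M.mul_one']) h

theorem mul_eq_self_of_mem_sq_add_sq (habs : M.AddMulSqAbsorb) {x p q m : A}
    (hp : M.mul x (M.mul p p) = x) (hq : M.mul x (M.mul q q) = x)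
    (hm : m ∈ M.add (M.mul p p) (M.mul q q)) : M.mul x m = x := by
  have h := mul_mem_add_of_eq hm hp hq rfl
  rwa [add_self habs, Set.mem_singleton_iff] at h

theorem eq_of_mem_sq_add_sq (huniq : M.SqAddSqUnique) {a b m m' : A}
    (hm : m ∈ M.add (M.mul a a) (M.mul b b)) (hm' : m' ∈ M.add (M.mul a a) (M.mul b b)) :
    m = m' :=
  (huniq a b).unique hm hm'

theorem sq_mul_eq_of_mem_sq_add_sq (hcube : M.IsTripotent) (habs : M.AddMulSqAbsorb)
    {x y m : A} (hm : m ∈ M.add (M.mul x x) (M.mul y y)) : M.mul (M.mul x x) m = M.mul x x := by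
  have h : M.mul (M.mul x x) m ∈ M.add (M.mul x x) (M.mul (M.mul x x) (M.mul y y)) :=
    mul_mem_add_of_eq hm (by rw [M.mul_assoc', hcube]) rfl rfl
  rwa [habs, Set.mem_singleton_iff] at h

theorem mul_self_eq_of_mem_sq_add_sq (hcube : M.IsTripotent) (habs : M.AddMulSqAbsorb)
    (huniq : M.SqAddSqUnique) {x y m : A} (hm : m ∈ M.add (M.mul x x) (M.mul y y)) :
    M.mul m m = m := by
  have hx := sq_mul_eq_of_mem_sq_add_sq hcube habs hm
  have hy := sq_mul_eq_of_mem_sq_add_sq hcube habs (by rwa [M.add_comm'] at hm)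
  refine eq_of_mem_sq_add_sq huniq (mul_mem_add_of_eq hm ?_ ?_ rfl) hm
  · rw [M.mul_comm', hx]
  · rw [M.mul_comm', hy]

theorem sq_mem_add_mul (habs : M.AddMulSqAbsorb) (huniq : M.SqAddSqUnique) {c p q m : A}
    (hc : c ∈ M.add p q) (hm : m ∈ M.add (M.mul p p) (M.mul q q)) :
    M.mul c c ∈ M.add m (M.mul p q) := by
  have hcc : M.mul c c ∈ M.add (M.mul c p) (M.mul c q) := M.mul_mem_add c _ _ _ hc
  have hcp : M.mul c p ∈ M.add (M.mul p p) (M.mul p q) :=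
    mul_mem_add_of_eq hc rfl rfl (M.mul_comm' p c)
  have hcq : M.mul c q ∈ M.add (M.mul p q) (M.mul q q) :=
    mul_mem_add_of_eq hc (M.mul_comm' q p) rfl (M.mul_comm' q c)
  -- `c² ∈ (p² + pq) + (pq + q²) ⊆ p² + ((pq + pq) + q²) = p² + (pq + q²) ⊆ m + pq`
  obtain ⟨z, hz, hcz⟩ := exists_mem_add_assoc' hcc hcp
  obtain ⟨y, hy, hzy⟩ := exists_mem_add_assoc hz hcq
  rw [add_self habs, Set.mem_singleton_iff] at hy
  subst hy
  obtain ⟨y, hy, hcy⟩ := exists_mem_add_assoc hcz (by rwa [M.add_comm'] at hzy)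
  rwa [eq_of_mem_sq_add_sq huniq hy hm] at hcy

theorem mul_eq_self_of_mem_add (hcube : M.IsTripotent) (habs : M.AddMulSqAbsorb)
    (huniq : M.SqAddSqUnique) {c p q m : A} (hc : c ∈ M.add p q)
    (hm : m ∈ M.add (M.mul p p) (M.mul q q)) : M.mul c m = c := by
  have hcm : M.mul c c ∈ M.add m (M.mul p q) := sq_mem_add_mul habs huniq hc hm
  have hpq : M.mul p q ∈ M.add m (M.neg m) := by
    refine mem_add_neg_self habs ?_
    rw [M.mul_comm']
    refine mul_eq_self_of_mem_sq_add_sq habs ?_ ?_ hm <;>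
      simp only [M.mul_assoc', M.mul_left_comm, M.mul_comm', hcube.mul_mul_mul, hcube _]
  obtain ⟨y, hy, hcy⟩ := exists_mem_add_assoc hcm hpq
  rw [add_self habs, Set.mem_singleton_iff] at hy
  rw [hy] at hcy
  have hmc : m ∈ M.add (M.mul c c) (M.mul m m) := by
    rw [mul_self_eq_of_mem_sq_add_sq hcube habs huniq hm]
    exact mem_add_of_mem_add_neg hcy
  calc M.mul c m = M.mul c (M.mul (M.mul c c) m) := by rw [← M.mul_assoc', hcube]
    _ = c := by rw [sq_mul_eq_of_mem_sq_add_sq hcube habs hmc, hcube]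

theorem mem_mul_sq_add_mul_sq (hcube : M.IsTripotent) (habs : M.AddMulSqAbsorb)
    (huniq : M.SqAddSqUnique) {c p q : A} (hc : c ∈ M.add p q) :
    c ∈ M.add (M.mul c (M.mul p p)) (M.mul c (M.mul q q)) := by
  obtain ⟨m, hm, -⟩ := huniq p q
  exact mul_mem_add_of_eq hm rfl rfl (mul_eq_self_of_mem_add hcube habs huniq hc hm)

theorem eq_mul_of_mem_mul_sq_add_mul_sq (hcube : M.IsTripotent) (habs : M.AddMulSqAbsorb)
    (huniq : M.SqAddSqUnique) {y d e m w : A} (hm : m ∈ M.add (M.mul d d) (M.mul e e))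
    (hw : w ∈ M.add (M.mul y (M.mul d d)) (M.mul y (M.mul e e))) : w = M.mul y m := by
  have hwy : M.mul w y = M.mul (M.mul y y) m := by
    refine eq_of_mem_sq_add_sq huniq (a := M.mul y d) (b := M.mul y e) ?_ ?_
    · refine mul_mem_add_of_eq hw ?_ ?_ (M.mul_comm' y w) <;>
        simp only [M.mul_assoc', M.mul_left_comm]
    · refine mul_mem_add_of_eq hm ?_ ?_ rfl <;>
        simp only [M.mul_assoc', M.mul_left_comm]
  have hwm : M.mul w (M.mul (M.mul y y) m) = w := by
    refine mul_eq_self_of_mem_add hcube habs huniq hw (mul_mem_add_of_eq hm ?_ ?_ rfl) <;>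
      simp only [M.mul_assoc', M.mul_left_comm, hcube _]
  have hmm := mul_self_eq_of_mem_sq_add_sq hcube habs huniq hm
  calc w = M.mul w (M.mul (M.mul y y) m) := hwm.symm
    _ = M.mul (M.mul w y) (M.mul y m) := by simp only [M.mul_assoc', M.mul_left_comm]
    _ = M.mul y m := by
        rw [hwy]
        simp only [M.mul_assoc', M.mul_left_comm, hcube.mul_mul_mul, hmm]

theorem mul_eq_mul_of_mem_sq_mul_add_sq_mul (hcube : M.IsTripotent) (habs : M.AddMulSqAbsorb)
    (huniq : M.SqAddSqUnique) {a b c d e : A} (hd : M.mul a d = M.mul b d)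
    (he : M.mul a e = M.mul b e)
    (hc : c ∈ M.add (M.mul (M.mul c c) d) (M.mul (M.mul c c) e)) :
    M.mul a c = M.mul b c := by
  obtain ⟨m, hm, -⟩ := huniq d e
  have hc' : c ∈ M.add (M.mul c (M.mul d d)) (M.mul c (M.mul e e)) := by
    have h := mem_mul_sq_add_mul_sq hcube habs huniq hc
    simpa only [M.mul_assoc', M.mul_left_comm, M.mul_comm', hcube.mul_mul_mul, hcube _] using h
  have hac : M.mul a c ∈ M.add (M.mul (M.mul b c) (M.mul d d))
      (M.mul (M.mul b c) (M.mul e e)) := by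
    refine mul_mem_add_of_eq hc' ?_ ?_ rfl
    · rw [M.mul_left_comm, ← M.mul_assoc' a, hd, M.mul_assoc', M.mul_left_comm, M.mul_assoc']
    · rw [M.mul_left_comm, ← M.mul_assoc' a, he, M.mul_assoc', M.mul_left_comm, M.mul_assoc']
  have hbc : M.mul b c ∈ M.add (M.mul (M.mul b c) (M.mul d d))
      (M.mul (M.mul b c) (M.mul e e)) :=
    mul_mem_add_of_eq hc' (M.mul_assoc' _ _ _).symm (M.mul_assoc' _ _ _).symm rfl
  exact (eq_mul_of_mem_mul_sq_add_mul_sq hcube habs huniq hm hac).trans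
    (eq_mul_of_mem_mul_sq_add_mul_sq hcube habs huniq hm hbc).symm

theorem mem_mul_add_of_mem_mul_mul_sq_add (habs : M.AddMulSqAbsorb) {e x c t : A}
    (h : e ∈ M.add (M.mul (M.mul e x) (M.mul c c)) t) : e ∈ M.add (M.mul e x) t := by
  have he : e ∈ M.add (M.mul e x) e := by rw [M.add_comm']; exact mem_add_mul habs e x
  obtain ⟨y, hy, hey⟩ := exists_mem_add_assoc he h
  rw [habs, Set.mem_singleton_iff] at hy
  rwa [hy] at hey

theorem mem_sq_mul_add_sq_mul_of_mem (habs : M.AddMulSqAbsorb) {a b c d e : A}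
    (h : e ∈ M.add (M.mul (M.mul (M.mul c e) (M.mul c e)) a)
      (M.mul (M.mul (M.mul d e) (M.mul d e)) b)) :
    e ∈ M.add (M.mul (M.mul e e) a) (M.mul (M.mul e e) b) := by
  have hmul : ∀ x y : A, M.mul (M.mul (M.mul x e) (M.mul x e)) y
      = M.mul (M.mul e (M.mul e y)) (M.mul x x) := by
    intro x y; simp only [M.mul_assoc', M.mul_left_comm, M.mul_comm']
  rw [hmul c, hmul d] at h
  have h' := mem_mul_add_of_mem_mul_mul_sq_add habs h
  rw [M.add_comm'] at h' ⊢
  rw [M.mul_assoc', M.mul_assoc']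
  exact mem_mul_add_of_mem_mul_mul_sq_add habs h'

theorem sq_mem_sq_add_sq_of_mem_sq_mul_add (hcube : M.IsTripotent) (habs : M.AddMulSqAbsorb)
    (huniq : M.SqAddSqUnique) {a b c : A}
    (h : a ∈ M.add (M.mul (M.mul a a) b) (M.mul (M.mul a a) c)) :
    M.mul a a ∈ M.add (M.mul (M.mul a b) (M.mul a b)) (M.mul (M.mul a c) (M.mul a c)) := by
  have ha : M.mul a a ∈ M.add (M.mul a b) (M.mul a c) := by
    refine mul_mem_add_of_eq h ?_ ?_ rfl <;> rw [← M.mul_assoc', hcube]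
  have h' := mem_mul_sq_add_mul_sq hcube habs huniq ha
  refine mul_mem_add_of_eq (d := M.mul a a) h' ?_ ?_ (by rw [M.mul_assoc', hcube]) <;>
    simp only [M.mul_assoc', M.mul_left_comm, hcube.mul_mul_mul]

theorem neg_mem_mul_sq_add_neg (hcube : M.IsTripotent) {a b e : A} (h : e ∈ M.add a b) :
    M.neg a ∈ M.add (M.mul b (M.mul a a)) (M.neg (M.mul e (M.mul a a))) := by
  refine mul_mem_add_of_eq (d := M.mul a a) (mem_add_reverse' (mem_add_reverse' h))
    (M.mul_comm' _ _) ?_ ?_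
  · rw [M.mul_neg, M.mul_comm']
  · rw [M.mul_neg, M.mul_comm', hcube]

theorem mem_add_of_neg_mem_add_neg {a x y : A} (h : M.neg a ∈ M.add x (M.neg y)) :
    y ∈ M.add a x := by
  have hx : x ∈ M.add y (M.neg a) := by rw [M.add_comm']; exact mem_add_of_mem_add_neg h
  rw [M.add_comm']
  exact mem_add_of_mem_add_neg hx

theorem mem_add_of_mem_mul_sq_add_mul_sq (hcube : M.IsTripotent) (habs : M.AddMulSqAbsorb)
    (huniq : M.SqAddSqUnique) {a b e : A}
    (h1 : e ∈ M.add (M.mul a (M.mul e e)) (M.mul b (M.mul e e)))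
    (h2 : M.neg a ∈ M.add (M.mul b (M.mul a a)) (M.neg (M.mul e (M.mul a a))))
    (h3 : M.neg b ∈ M.add (M.mul a (M.mul b b)) (M.neg (M.mul e (M.mul b b)))) :
    e ∈ M.add a b := by
  have ha : M.mul e (M.mul a a) ∈ M.add a (M.mul b (M.mul a a)) := mem_add_of_neg_mem_add_neg h2
  have hb : M.mul e (M.mul b b) ∈ M.add b (M.mul a (M.mul b b)) := mem_add_of_neg_mem_add_neg h3
  have he : e ∈ M.add (M.mul e (M.mul a a)) (M.mul e (M.mul b b)) := by
    have h := mem_mul_sq_add_mul_sq hcube habs huniq h1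
    simpa only [M.mul_assoc', M.mul_left_comm, M.mul_comm', hcube.mul_mul_mul, hcube _] using h
  -- `e ∈ (a + ba²) + (b + ab²) ⊆ a + ((ba² + b) + ab²) = a + (b + ab²) ⊆ (a + ab²) + b`
  obtain ⟨z, hz, hez⟩ := exists_mem_add_assoc' he ha
  obtain ⟨u, hu, hzu⟩ := exists_mem_add_assoc hz hb
  rw [M.add_comm', habs, Set.mem_singleton_iff] at hu
  rw [hu] at hzu
  obtain ⟨x, hx, hex⟩ := exists_mem_add_assoc' (by rwa [M.add_comm'] at hez) hzu
  rw [M.add_comm', habs, Set.mem_singleton_iff] at hx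
  rwa [hx, M.add_comm'] at hex

theorem mem_add_iff (hcube : M.IsTripotent) (habs : M.AddMulSqAbsorb)
    (huniq : M.SqAddSqUnique) {a b e : A} : e ∈ M.add a b ↔
    (e ∈ M.add (M.mul a (M.mul e e)) (M.mul b (M.mul e e)) ∧
     M.neg a ∈ M.add (M.mul b (M.mul a a)) (M.neg (M.mul e (M.mul a a))) ∧
     M.neg b ∈ M.add (M.mul a (M.mul b b)) (M.neg (M.mul e (M.mul b b)))) := by
  refine ⟨fun h => ⟨?_, neg_mem_mul_sq_add_neg hcube h, ?_⟩,
    fun ⟨h1, h2, h3⟩ => mem_add_of_mem_mul_sq_add_mul_sq hcube habs huniq h1 h2 h3⟩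
  · exact mul_mem_add_of_eq h (M.mul_comm' _ _) (M.mul_comm' _ _) (by rw [M.mul_comm', hcube])
  · exact neg_mem_mul_sq_add_neg hcube (by rwa [M.add_comm'] at h)

end Multiring

/-- Every real reduced multiring is a quadratically tuned multiring. -/
theorem statement_9 {A : Type u} (M : Multiring A) (h : M.IsRealReduced) :
    M.IsQT := by
  obtain ⟨-, hcube, habs, huniq⟩ := h
  exact ⟨hcube, Multiring.one_mem_one_add habs,
    fun _ _ _ _ _ => Multiring.mul_eq_mul_of_mem_sq_mul_add_sq_mul hcube habs huniq,
    fun _ _ _ _ _ => Multiring.mem_sq_mul_add_sq_mul_of_mem habs,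
    fun _ _ _ => Multiring.sq_mem_sq_add_sq_of_mem_sq_mul_add hcube habs huniq,
    fun _ _ _ => Multiring.mem_add_iff hcube habs huniq⟩
end

section
/- Let (G, ·, 1, 0, −1, D) be a pre-real semigroup and define a + b := {d ∈ G : d ∈ Dᵗ(a, b)} and −g := (−1)·g. Then (G, +, ·, −, 0, 1) is a quadratically tuned multiring. -/
/-! # Multirings (Marshall) -/

universe u v

/-! The multiring axioms are symmetries of `Dᵗ`: RS0 makes `+` commutative, RS3 makes it
associative, RS2 with `d = -1` turns `c ∈ a + b` into `a ∈ c - b`, and RS7' (`a + 0 = {a}`) then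
yields `0 ∈ a - a` and uniqueness of negatives. The QT axioms are RS4, RS5, RS6 and RS8 once squares
are cancelled using `a⁴ = a²` and `(-a)² = a²`. -/

namespace PreRealSemigroupAux

variable {G : Type u} (S : PreRealSemigroupAux G)

lemma mul_left_comm (a b c : G) : S.mul a (S.mul b c) = S.mul b (S.mul a c) := by
  rw [← S.mul_assoc', S.mul_comm' a b, S.mul_assoc']

lemma mul_mul_mul_comm (a b c d : G) :
    S.mul (S.mul a b) (S.mul c d) = S.mul (S.mul a c) (S.mul b d) := by
  rw [S.mul_assoc', S.mul_left_comm b, ← S.mul_assoc']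

lemma one_mul (a : G) : S.mul S.one a = a := by
  rw [S.mul_comm', S.mul_one']

lemma mul_self_mul_self (a : G) : S.mul (S.mul a a) (S.mul a a) = S.mul a a := by
  rw [S.mul_assoc', S.cube]

lemma neg_neg (a : G) : S.neg (S.neg a) = a := by
  rw [TernaryStruct.neg, TernaryStruct.neg, ← S.mul_assoc', S.negOne_mul_negOne, S.one_mul]

lemma mul_neg (a b : G) : S.mul a (S.neg b) = S.neg (S.mul a b) :=
  S.mul_left_comm a S.negOne b

lemma mul_negOne (a : G) : S.mul a S.negOne = S.neg a :=
  S.mul_comm' a S.negOne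

lemma neg_one : S.neg S.one = S.negOne :=
  S.mul_one' S.negOne

lemma neg_mul (a b : G) : S.mul (S.neg a) b = S.neg (S.mul a b) :=
  S.mul_assoc' S.negOne a b

lemma neg_mul_neg (a b : G) : S.mul (S.neg a) (S.neg b) = S.mul a b := by
  rw [S.neg_mul, S.mul_neg, S.neg_neg]

lemma D_mul_left (d : G) {a b c : G} (h : S.D a b c) :
    S.D (S.mul d a) (S.mul d b) (S.mul d c) := by
  simpa only [S.mul_comm' d] using S.rs2 a b c d h

lemma D_neg_iff {a b c : G} : S.D (S.neg a) (S.neg b) (S.neg c) ↔ S.D a b c := by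
  refine ⟨fun h => ?_, S.D_mul_left S.negOne⟩
  have h' : S.D (S.neg (S.neg a)) (S.neg (S.neg b)) (S.neg (S.neg c)) := S.D_mul_left S.negOne h
  rwa [S.neg_neg, S.neg_neg, S.neg_neg] at h'

lemma D_of_D_mul_sq {a b c e : G}
    (h : S.D e (S.mul a (S.mul c c)) (S.mul b (S.mul c c))) : S.D e a b :=
  S.rs4 a b c c e (by simpa only [S.mul_comm' _ (S.mul c c)] using h)

lemma Dt_mul_sq_of_D {a b c : G} (h : S.D c a b) :
    S.Dt c (S.mul a (S.mul c c)) (S.mul b (S.mul c c)) := by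
  simpa only [S.mul_comm' (S.mul c c)] using S.rs6 a b c h

lemma Dt_comm {d a b : G} : S.Dt d a b ↔ S.Dt d b a :=
  ⟨fun ⟨h₁, h₂, h₃⟩ => ⟨(S.rs0 _ _ _).1 h₁, (S.rs0 _ _ _).1 h₃, (S.rs0 _ _ _).1 h₂⟩,
    fun ⟨h₁, h₂, h₃⟩ => ⟨(S.rs0 _ _ _).1 h₁, (S.rs0 _ _ _).1 h₃, (S.rs0 _ _ _).1 h₂⟩⟩

lemma Dt_rotate {a b c : G} (h : S.Dt c a b) : S.Dt a c (S.neg b) := by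
  obtain ⟨h₁, h₂, h₃⟩ := h
  refine ⟨?_, S.D_neg_iff.2 h₁, ?_⟩
  · rwa [← S.D_neg_iff, S.neg_neg]
  · rw [S.neg_neg, S.rs0]
    simpa only [S.neg_neg] using S.D_neg_iff.2 h₃

lemma Dt_mul_left (d : G) {a b c : G} (h : S.Dt c a b) :
    S.Dt (S.mul d c) (S.mul d a) (S.mul d b) := by
  obtain ⟨h₁, h₂, h₃⟩ := h
  refine ⟨S.D_mul_left d h₁, ?_, ?_⟩
  · simpa only [S.mul_neg] using S.D_mul_left d h₂
  · simpa only [S.mul_neg] using S.D_mul_left d h₃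

lemma Dt_assoc {p a b c : G} :
    (∃ x, S.Dt x b c ∧ S.Dt p a x) ↔ ∃ y, S.Dt y a b ∧ S.Dt p y c := by
  constructor
  · rintro ⟨x, hx, hp⟩
    exact S.rs3 p a x b c hp hx
  · rintro ⟨y, hy, hp⟩
    obtain ⟨x, hx, hp'⟩ := S.rs3 p c y b a (S.Dt_comm.1 hp) (S.Dt_comm.1 hy)
    exact ⟨x, S.Dt_comm.1 hx, S.Dt_comm.1 hp'⟩

/-- Apply RS6 to `c ∈ D(c, -1)`, multiply by `c` and cancel `c²` with RS4. -/
lemma D_one_negOne (c : G) : S.D c S.one S.negOne := by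
  have h : S.D (S.mul c c) c (S.neg c) := by
    simpa only [S.mul_negOne, S.neg_neg, S.mul_assoc', S.cube] using
      (S.rs6 c S.negOne c (S.rs1 c S.negOne)).2.2
  have hc := S.D_mul_left c h
  rw [S.cube, S.mul_neg] at hc
  refine S.D_of_D_mul_sq (c := c) ?_
  rwa [S.one_mul]

lemma Dt_one_one (a : G) : S.Dt S.one S.one a :=
  ⟨S.rs1 _ _, S.rs1 _ _, by rw [S.neg_one]; exact S.D_one_negOne (S.neg a)⟩

lemma Dt_sq_of_Dt_sq_mul {a b c : G}
    (h : S.Dt a (S.mul (S.mul a a) b) (S.mul (S.mul a a) c)) :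
    S.Dt (S.mul a a) (S.mul (S.mul a b) (S.mul a b)) (S.mul (S.mul a c) (S.mul a c)) := by
  have hsq := S.rs8 a b c (S.rs4 b c a a a h.1)
  simpa only [S.mul_mul_mul_comm a _ a, S.mul_self_mul_self] using S.rs6 _ _ _ hsq

lemma Dt_iff_Dt_mul_sq (a b e : G) :
    S.Dt e a b ↔
      S.Dt e (S.mul a (S.mul e e)) (S.mul b (S.mul e e)) ∧
      S.Dt (S.neg a) (S.mul b (S.mul a a)) (S.neg (S.mul e (S.mul a a))) ∧
      S.Dt (S.neg b) (S.mul a (S.mul b b)) (S.neg (S.mul e (S.mul b b))) := by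
  constructor
  · rintro ⟨h₁, h₂, h₃⟩
    refine ⟨S.Dt_mul_sq_of_D h₁, ?_, ?_⟩
    · simpa only [S.neg_mul_neg, S.neg_mul] using S.Dt_mul_sq_of_D ((S.rs0 _ _ _).1 h₂)
    · simpa only [S.neg_mul_neg, S.neg_mul] using S.Dt_mul_sq_of_D h₃
  · rintro ⟨⟨h₁, -⟩, ⟨h₂, -⟩, ⟨h₃, -⟩⟩
    refine ⟨S.D_of_D_mul_sq h₁, (S.rs0 _ _ _).1 (S.D_of_D_mul_sq (c := a) ?_),
      S.D_of_D_mul_sq (c := b) ?_⟩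
    · rwa [S.neg_mul]
    · rwa [S.neg_mul]

end PreRealSemigroupAux

namespace PreRealSemigroup

variable {G : Type u} (S : PreRealSemigroup G)

lemma Dt_zero_right_iff {x a : G} : S.Dt x a S.zero ↔ x = a :=
  S.Dt_comm.trans (S.rs7' x a)

lemma Dt_zero_neg (a : G) : S.Dt S.zero a (S.neg a) :=
  S.Dt_rotate ((S.rs7' a a).2 rfl)

lemma eq_neg_of_Dt_zero {a b : G} (h : S.Dt S.zero a b) : b = S.neg a := by
  rw [(S.rs7' a (S.neg b)).1 (S.Dt_rotate h), S.neg_neg]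

lemma exists_Dt (a b : G) : ∃ x, S.Dt x a b :=
  let ⟨x, hx, _⟩ := S.rs3 a a S.zero b (S.neg b) (S.Dt_zero_right_iff.2 rfl) (S.Dt_zero_neg b)
  ⟨x, hx⟩

def toMultiring : Multiring G where
  add a b := {d | S.Dt d a b}
  mul := S.mul
  neg := S.neg
  zero := S.zero
  one := S.one
  add_nonempty := S.exists_Dt
  add_comm' _ _ := Set.ext fun _ => S.Dt_comm
  add_assoc' _ _ _ := Set.ext fun _ => by
    simpa only [Set.mem_iUnion, Set.mem_ofPred_eq, exists_prop] using S.Dt_assoc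
  add_zero' _ := Set.ext fun _ => S.Dt_zero_right_iff
  zero_mem_add_neg := S.Dt_zero_neg
  neg_unique _ _ := S.eq_neg_of_Dt_zero
  mem_add_reverse _ _ _ := S.Dt_rotate
  mul_comm' := S.mul_comm'
  mul_assoc' := S.mul_assoc'
  mul_one' := S.mul_one'
  mul_zero' := S.mul_zero'
  mul_mem_add d _ _ _ := S.Dt_mul_left d

lemma isQT_toMultiring : S.toMultiring.IsQT :=
  ⟨S.cube, S.Dt_one_one,
    fun a b c d e had hae hc => S.rs5 a b c d e had hae (S.rs4 d e c c c hc.1),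
    fun a b c d e h => S.rs6 a b e (S.rs4 a b (S.mul c e) (S.mul d e) e h.1),
    fun _ _ _ => S.Dt_sq_of_Dt_sq_mul, S.Dt_iff_Dt_mul_sq⟩

end PreRealSemigroup

/-- For a pre-real semigroup `(G, ·, 1, 0, −1, D)`, setting
`a + b := {d ∈ G : d ∈ Dᵗ(a,b)}` and `−g := (−1)·g` yields a quadratically tuned
multiring `(G, +, ·, −, 0, 1)`. -/
theorem statement_11 {G : Type u} (S : PreRealSemigroup G) :
    ∃ Q : Multiring G,
      (∀ a b : G, Q.add a b = {d : G | S.toTernaryStruct.Dt d a b}) ∧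
      Q.mul = S.mul ∧
      (∀ a : G, Q.neg a = S.mul S.negOne a) ∧
      Q.zero = S.zero ∧ Q.one = S.one ∧
      Q.IsQT :=
  ⟨S.toMultiring, fun _ _ => rfl, rfl, fun _ => rfl, rfl, rfl, S.isQT_toMultiring⟩
end

section
/- The assignment G ↦ M(G), sending a pre-real semigroup G to the quadratically tuned multiring with underlying set G, multiplication of G, a + b := Dᵗ(a,b), and −g := (−1)g, is functorial: if f : G → H is a morphism of pre-real semigroups (a map preserving ·, 1, 0, −1 and the relation D), then the same map f : M(G) → M(H) is a morphism of multirings. -/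
/-! # Multirings (Marshall) -/

universe u v

namespace IsPRSHom

variable {G : Type u} {H : Type v} {S : PreRealSemigroup G} {T : PreRealSemigroup H} {f : G → H}

theorem map_neg (hf : IsPRSHom S T f) (a : G) : f (S.neg a) = T.neg (f a) := by
  obtain ⟨-, -, hnegOne, hmul, -⟩ := hf
  rw [TernaryStruct.neg, TernaryStruct.neg, hmul, hnegOne]

theorem map_Dt (hf : IsPRSHom S T f) {a b c : G} (h : S.Dt a b c) :
    T.Dt (f a) (f b) (f c) := by
  obtain ⟨hD₁, hD₂, hD₃⟩ := h
  have hD := hf.2.2.2.2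
  refine ⟨hD _ _ _ hD₁, ?_, ?_⟩
  · simpa only [hf.map_neg] using hD _ _ _ hD₂
  · simpa only [hf.map_neg] using hD _ _ _ hD₃

end IsPRSHom

/-- The assignment `G ↦ M(G)` is functorial: if `f : G → H` is a
morphism of pre-real semigroups, then the same map `f : M(G) → M(H)`, where `M(G)`
is the quadratically tuned multiring with underlying set `G`, the multiplication of
`G`, `a + b := Dᵗ(a,b)` and `−g := (−1)g`, is a morphism of multirings. -/
theorem statement_13 {G : Type u} {H : Type v}
    (SG : PreRealSemigroup G) (SH : PreRealSemigroup H)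
    (f : G → H) (hf : IsPRSHom SG SH f)
    (QG : Multiring G) (QH : Multiring H)
    (hQGadd : ∀ a b : G, QG.add a b = {d : G | SG.toTernaryStruct.Dt d a b})
    (hQGmul : QG.mul = SG.mul)
    (hQGneg : ∀ a : G, QG.neg a = SG.mul SG.negOne a)
    (hQGzero : QG.zero = SG.zero) (hQGone : QG.one = SG.one)
    (hQHadd : ∀ a b : H, QH.add a b = {d : H | SH.toTernaryStruct.Dt d a b})
    (hQHmul : QH.mul = SH.mul)
    (hQHneg : ∀ a : H, QH.neg a = SH.mul SH.negOne a)
    (hQHzero : QH.zero = SH.zero) (hQHone : QH.one = SH.one) :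
    Multiring.IsHom QG QH f := by
  have ⟨hone, hzero, _, hmul, _⟩ := hf
  refine ⟨?_, ?_, fun a => ?_, fun a b => ?_, fun a b c hc => ?_⟩
  · rw [hQGzero, hQHzero, hzero]
  · rw [hQGone, hQHone, hone]
  · rw [hQGneg, hQHneg]
    exact hf.map_neg a
  · rw [hQGmul, hQHmul, hmul]
  · rw [hQGadd] at hc
    rw [hQHadd]
    exact hf.map_Dt hc
end

section
/- Let X be a nonempty set and G a submonoid of the functions X → {−1,0,1} under pointwise multiplication, containing the constants −1, 0, 1 and separating points of X (axiom AX1). Then G satisfies both AX3a (if p ∈ D(a,q) for some q ∈ D(b,c), then p ∈ D(r,c) for some r ∈ D(a,b)) and AX3b (Dᵗ(a,b) ≠ ∅ for all a, b ∈ G) if and only if G satisfies AX3 (if p ∈ Dᵗ(a,q) for some q ∈ Dᵗ(b,c), then p ∈ Dᵗ(r,c) for some r ∈ Dᵗ(a,b)). -/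
/-! # Multirings (Marshall) -/

universe u v

/-!
Pointwise, `Dᵗ(a, b)` is the sum `a + b` of the hyperfield `Q₂` and `D(a, b)` is that sum with `0`
adjoined, so AX3 asks for one `r ∈ G` whose value at every point lies in
`Q2mid a b c p = {r ∈ a + b | p ∈ r + c}`. An `r` given by AX3a, multiplied by `p²`, lies pointwise
in `Q2mid` or is `0`, and lies in `Q2mid` wherever `p ≠ 0` and `p ≠ c`. The relabellings
`(a, b, c, p) ↦ (b, a, -p, -c)` and `(a, b, c, p) ↦ (-c, p, -a, b)` preserve the hypotheses and
`Q2mid`, so they give four such partial solutions, which together cover every point where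
`0 ∉ Q2mid`. As each `Q2mid` is empty, a singleton or all of `Q₂`, transversal sums, which exist
by AX3b, glue partial solutions together.
Conversely, AX3b is the case `c = -b`, `p = a`, `q = 0` of AX3, and AX3a is AX3 for the data
multiplied by squares, which turn each `D` into a `Dᵗ`.
-/

theorem mem_Q2add_iff {a b c : SignType} :
    c ∈ Q2add a b ↔ 0 < a * c ∨ 0 < b * c ∨ (c = 0 ∧ b = -a) := by
  cases a <;> cases b <;> cases c <;> simp [Q2add]

instance (a b c : SignType) : Decidable (c ∈ Q2add a b) :=
  decidable_of_iff _ mem_Q2add_iff.symm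

theorem zero_or_mem_Q2add_iff {a b c : SignType} :
    c = 0 ∨ c ∈ Q2add a b ↔ 0 < a * c ∨ 0 < b * c ∨ c = 0 := by
  decide +revert

theorem zero_or_mem_Q2add_iff_mem_Q2add_mul_self {a b c : SignType} :
    c = 0 ∨ c ∈ Q2add a b ↔ c ∈ Q2add (a * (c * c)) (b * (c * c)) := by
  decide +revert

theorem zero_mem_Q2add_neg (a : SignType) : 0 ∈ Q2add a (-a) := by
  decide +revert

theorem mem_Q2add_zero (a : SignType) : a ∈ Q2add a 0 := by
  decide +revert

theorem mul_mem_Q2add_mul {a b c : SignType} (d : SignType) (h : c ∈ Q2add a b) :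
    c * d ∈ Q2add (a * d) (b * d) := by
  decide +revert

theorem zero_or_mem_Q2add_of_mem_Q2add_mul {a b c s t : SignType} (hs : 0 ≤ s) (ht : 0 ≤ t)
    (h : c ∈ Q2add (a * s) (b * t)) : c = 0 ∨ c ∈ Q2add a b := by
  decide +revert

theorem Q2add_swap {a b c p q : SignType} (hq : q ∈ Q2add b c) (hp : p ∈ Q2add a q) :
    -q ∈ Q2add a (-p) ∧ -c ∈ Q2add b (-q) := by
  decide +revert

theorem Q2add_rotate {a b c p q : SignType} (hq : q ∈ Q2add b c) (hp : p ∈ Q2add a q) :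
    q ∈ Q2add p (-a) ∧ b ∈ Q2add (-c) q := by
  decide +revert

def Q2mid (a b c p : SignType) : Set SignType := {r | r ∈ Q2add a b ∧ p ∈ Q2add r c}

instance (a b c p r : SignType) : Decidable (r ∈ Q2mid a b c p) :=
  inferInstanceAs (Decidable (_ ∧ _))

theorem zero_mem_Q2mid (a c : SignType) : 0 ∈ Q2mid a (-a) c c := by
  decide +revert

/- Both relabellings permute the four terms of `0 ∈ a + b + c + (-p)` up to a global sign,
keeping the pairing `{a, b}, {c, -p}`. -/
theorem Q2mid_swap (a b c p : SignType) : Q2mid b a (-p) (-c) = Q2mid a b c p := by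
  ext r; decide +revert

theorem Q2mid_rotate (a b c p : SignType) : Q2mid (-c) p (-a) b = Q2mid a b c p := by
  ext r; decide +revert

theorem mul_self_mem_Q2mid {a b c p q r : SignType} (hq : q ∈ Q2add b c) (hp : p ∈ Q2add a q)
    (hr : r = 0 ∨ r ∈ Q2add a b) (hpr : p = 0 ∨ p ∈ Q2add r c) :
    (r * (p * p) = 0 ∨ r * (p * p) ∈ Q2mid a b c p) ∧
      (p ≠ 0 → p ≠ c → r * (p * p) ∈ Q2mid a b c p) := by
  decide +revert

theorem mem_Q2mid_of_mem_Q2add {a b c p w₁ w₂ w : SignType}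
    (h₁ : w₁ = 0 ∨ w₁ ∈ Q2mid a b c p) (h₂ : w₂ = 0 ∨ w₂ ∈ Q2mid a b c p)
    (h : w ∈ Q2add w₁ w₂) :
    (w = 0 ∨ w ∈ Q2mid a b c p) ∧
      (w₁ ∈ Q2mid a b c p ∨ w₂ ∈ Q2mid a b c p → w ∈ Q2mid a b c p) := by
  decide +revert

section SignFunctions

variable {X : Type u} {G : Set (X → SignType)} {a b c d p q : X → SignType}

def MulClosed (G : Set (X → SignType)) : Prop :=
  ∀ {a b : X → SignType}, a ∈ G → b ∈ G → (fun x => a x * b x) ∈ G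

/-- AX3a. -/
def DAssoc (G : Set (X → SignType)) : Prop :=
  ∀ a b c p q : X → SignType, a ∈ G → b ∈ G → c ∈ G →
    q ∈ Dfun G b c → p ∈ Dfun G a q → ∃ r ∈ Dfun G a b, p ∈ Dfun G r c

/-- AX3b. -/
def DtNonempty (G : Set (X → SignType)) : Prop :=
  ∀ a b : X → SignType, a ∈ G → b ∈ G → (Dtfun G a b).Nonempty

/-- AX3. -/
def DtAssoc (G : Set (X → SignType)) : Prop :=
  ∀ a b c p q : X → SignType, a ∈ G → b ∈ G → c ∈ G →
    q ∈ Dtfun G b c → p ∈ Dtfun G a q → ∃ r ∈ Dtfun G a b, p ∈ Dtfun G r c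

theorem neg_mem (hneg1 : (fun _ => (-1 : SignType)) ∈ G) (hmul : MulClosed G) (ha : a ∈ G) :
    -a ∈ G := by
  convert hmul hneg1 ha using 1
  funext x
  exact (neg_one_mul (a x)).symm

theorem mem_Dtfun_iff : c ∈ Dtfun G a b ↔ c ∈ G ∧ ∀ x, c x ∈ Q2add (a x) (b x) := by
  simp only [Dtfun, Set.mem_ofPred_eq, mem_Q2add_iff]

theorem mem_Dfun_iff : c ∈ Dfun G a b ↔ c ∈ G ∧ ∀ x, c x = 0 ∨ c x ∈ Q2add (a x) (b x) := by
  simp only [Dfun, Set.mem_ofPred_eq, zero_or_mem_Q2add_iff]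

theorem Dtfun_subset_Dfun : Dtfun G a b ⊆ Dfun G a b := fun _ h =>
  mem_Dfun_iff.2 ⟨(mem_Dtfun_iff.1 h).1, fun x => Or.inr ((mem_Dtfun_iff.1 h).2 x)⟩

theorem mem_Dfun_iff_mem_Dtfun_mul_self :
    c ∈ Dfun G a b ↔ c ∈ Dtfun G (a * (c * c)) (b * (c * c)) := by
  simp only [mem_Dfun_iff, mem_Dtfun_iff, zero_or_mem_Q2add_iff_mem_Q2add_mul_self]
  rfl

theorem mul_mem_Dtfun_mul (hmul : MulClosed G) (hc : c ∈ Dtfun G a b) (hd : d ∈ G) :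
    c * d ∈ Dtfun G (a * d) (b * d) :=
  mem_Dtfun_iff.2 ⟨hmul (mem_Dtfun_iff.1 hc).1 hd,
    fun x => mul_mem_Q2add_mul (d x) ((mem_Dtfun_iff.1 hc).2 x)⟩

theorem Dtfun_mul_subset_Dfun {s t : X → SignType} (hs : ∀ x, 0 ≤ s x) (ht : ∀ x, 0 ≤ t x) :
    Dtfun G (a * s) (b * t) ⊆ Dfun G a b := fun _ h =>
  mem_Dfun_iff.2 ⟨(mem_Dtfun_iff.1 h).1,
    fun x => zero_or_mem_Q2add_of_mem_Q2add_mul (hs x) (ht x) ((mem_Dtfun_iff.1 h).2 x)⟩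

theorem Dtfun_swap (hneg : ∀ {a : X → SignType}, a ∈ G → -a ∈ G) (hc : c ∈ G)
    (hq : q ∈ Dtfun G b c) (hp : p ∈ Dtfun G a q) :
    -q ∈ Dtfun G a (-p) ∧ -c ∈ Dtfun G b (-q) := by
  simp only [mem_Dtfun_iff] at hq hp ⊢
  exact ⟨⟨hneg hq.1, fun x => (Q2add_swap (hq.2 x) (hp.2 x)).1⟩,
    ⟨hneg hc, fun x => (Q2add_swap (hq.2 x) (hp.2 x)).2⟩⟩

theorem Dtfun_rotate (hb : b ∈ G) (hq : q ∈ Dtfun G b c) (hp : p ∈ Dtfun G a q) :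
    q ∈ Dtfun G p (-a) ∧ b ∈ Dtfun G (-c) q := by
  simp only [mem_Dtfun_iff] at hq hp ⊢
  exact ⟨⟨hq.1, fun x => (Q2add_rotate (hq.2 x) (hp.2 x)).1⟩,
    ⟨hb, fun x => (Q2add_rotate (hq.2 x) (hp.2 x)).2⟩⟩

theorem DAssoc.exists_mul_self_mem_Q2mid (hD : DAssoc G) (hmul : MulClosed G)
    (ha : a ∈ G) (hb : b ∈ G) (hc : c ∈ G) (hq : q ∈ Dtfun G b c) (hp : p ∈ Dtfun G a q) :
    ∃ w ∈ G, ∀ x, (w x = 0 ∨ w x ∈ Q2mid (a x) (b x) (c x) (p x)) ∧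
      (p x ≠ 0 → p x ≠ c x → w x ∈ Q2mid (a x) (b x) (c x) (p x)) := by
  obtain ⟨r, hr, hpr⟩ := hD a b c p q ha hb hc (Dtfun_subset_Dfun hq) (Dtfun_subset_Dfun hp)
  rw [mem_Dfun_iff] at hr hpr
  rw [mem_Dtfun_iff] at hq hp
  exact ⟨r * (p * p), hmul hr.1 (hmul hp.1 hp.1),
    fun x => mul_self_mem_Q2mid (hq.2 x) (hp.2 x) (hr.2 x) (hpr.2 x)⟩

theorem DtNonempty.exists_glue (hDt : DtNonempty G) {w₁ w₂ : X → SignType}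
    (hw₁ : w₁ ∈ G) (hw₂ : w₂ ∈ G)
    (h₁ : ∀ x, w₁ x = 0 ∨ w₁ x ∈ Q2mid (a x) (b x) (c x) (p x))
    (h₂ : ∀ x, w₂ x = 0 ∨ w₂ x ∈ Q2mid (a x) (b x) (c x) (p x)) :
    ∃ w ∈ G, ∀ x, (w x = 0 ∨ w x ∈ Q2mid (a x) (b x) (c x) (p x)) ∧
      (w₁ x ∈ Q2mid (a x) (b x) (c x) (p x) ∨ w₂ x ∈ Q2mid (a x) (b x) (c x) (p x) →
        w x ∈ Q2mid (a x) (b x) (c x) (p x)) := by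
  obtain ⟨w, hw⟩ := hDt w₁ w₂ hw₁ hw₂
  rw [mem_Dtfun_iff] at hw
  exact ⟨w, hw.1, fun x => mem_Q2mid_of_mem_Q2add (h₁ x) (h₂ x) (hw.2 x)⟩

theorem exists_mem_Q2mid_of_ne (hD : DAssoc G) (hDt : DtNonempty G) (hmul : MulClosed G)
    (hneg : ∀ {a : X → SignType}, a ∈ G → -a ∈ G) (ha : a ∈ G) (hb : b ∈ G) (hc : c ∈ G)
    (hq : q ∈ Dtfun G b c) (hp : p ∈ Dtfun G a q) :
    ∃ w ∈ G, ∀ x, (w x = 0 ∨ w x ∈ Q2mid (a x) (b x) (c x) (p x)) ∧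
      (p x ≠ c x → w x ∈ Q2mid (a x) (b x) (c x) (p x)) := by
  have hswap := Dtfun_swap hneg hc hq hp
  obtain ⟨w₁, hw₁, h₁⟩ := hD.exists_mul_self_mem_Q2mid hmul ha hb hc hq hp
  obtain ⟨w₂, hw₂, h₂⟩ := hD.exists_mul_self_mem_Q2mid hmul hb ha
    (hneg (mem_Dtfun_iff.1 hp).1) hswap.1 hswap.2
  simp only [Pi.neg_apply, Q2mid_swap, ne_eq, SignType.neg_eq_zero_iff, neg_inj] at h₂
  obtain ⟨w, hw, h⟩ := hDt.exists_glue hw₁ hw₂ (fun x => (h₁ x).1) (fun x => (h₂ x).1)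
  refine ⟨w, hw, fun x => ⟨(h x).1, fun hpc => (h x).2 ?_⟩⟩
  by_cases hp0 : p x = 0
  · exact Or.inr ((h₂ x).2 (fun hc0 => hpc (hp0.trans hc0.symm)) (Ne.symm hpc))
  · exact Or.inl ((h₁ x).2 hp0 hpc)

theorem dtAssoc_of_dAssoc (hD : DAssoc G) (hDt : DtNonempty G) (hmul : MulClosed G)
    (hneg : ∀ {a : X → SignType}, a ∈ G → -a ∈ G) : DtAssoc G := by
  intro a b c p q ha hb hc hq hp
  have hpG := (mem_Dtfun_iff.1 hp).1
  have hrot := Dtfun_rotate hb hq hp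
  obtain ⟨v₁, hv₁, h₁⟩ := exists_mem_Q2mid_of_ne hD hDt hmul hneg ha hb hc hq hp
  obtain ⟨v₂, hv₂, h₂⟩ :=
    exists_mem_Q2mid_of_ne hD hDt hmul hneg (hneg hc) hpG (hneg ha) hrot.1 hrot.2
  simp only [Pi.neg_apply, Q2mid_rotate] at h₂
  obtain ⟨r, hr, h⟩ := hDt.exists_glue hv₁ hv₂ (fun x => (h₁ x).1) (fun x => (h₂ x).1)
  have hmid : ∀ x, r x ∈ Q2mid (a x) (b x) (c x) (p x) := by
    intro x
    by_cases hpc : p x = c x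
    · by_cases hab : b x = -a x
      · rcases (h x).1 with hr0 | hrmid
        · rw [hr0, hab, hpc]
          exact zero_mem_Q2mid _ _
        · exact hrmid
      · exact (h x).2 (Or.inr ((h₂ x).2 hab))
    · exact (h x).2 (Or.inl ((h₁ x).2 hpc))
  exact ⟨r, mem_Dtfun_iff.2 ⟨hr, fun x => (hmid x).1⟩, mem_Dtfun_iff.2 ⟨hpG, fun x => (hmid x).2⟩⟩

theorem dtNonempty_of_dtAssoc (h : DtAssoc G) (h0 : (fun _ => (0 : SignType)) ∈ G)
    (hneg : ∀ {a : X → SignType}, a ∈ G → -a ∈ G) : DtNonempty G := by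
  intro a b ha hb
  obtain ⟨r, hr, -⟩ := h a b (-b) a 0 ha hb (hneg hb)
    (mem_Dtfun_iff.2 ⟨h0, fun x => zero_mem_Q2add_neg (b x)⟩)
    (mem_Dtfun_iff.2 ⟨ha, fun x => mem_Q2add_zero (a x)⟩)
  exact ⟨r, hr⟩

theorem dAssoc_of_dtAssoc (h : DtAssoc G) (hmul : MulClosed G) : DAssoc G := by
  intro a b c p q ha hb hc hq hp
  have hpG := (mem_Dfun_iff.1 hp).1
  have hqG := (mem_Dfun_iff.1 hq).1
  have hpp : p * p ∈ G := hmul hpG hpG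
  have hq' := mul_mem_Dtfun_mul hmul (mem_Dfun_iff_mem_Dtfun_mul_self.1 hq) hpp
  rw [mul_assoc b, mul_assoc c] at hq'
  obtain ⟨r, hr, hpr⟩ := h (a * (p * p)) (b * (q * q * (p * p))) (c * (q * q * (p * p))) p
    (q * (p * p)) (hmul ha hpp) (hmul hb (hmul (hmul hqG hqG) hpp))
    (hmul hc (hmul (hmul hqG hqG) hpp)) hq' (mem_Dfun_iff_mem_Dtfun_mul_self.1 hp)
  have hsq : ∀ u v : SignType, 0 ≤ u * u ∧ 0 ≤ u * u * (v * v) := by decide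
  have hs : ∀ x, 0 ≤ (p * p) x := fun x => (hsq (p x) 1).1
  have ht : ∀ x, 0 ≤ (q * q * (p * p)) x := fun x => (hsq (q x) (p x)).2
  refine ⟨r, Dtfun_mul_subset_Dfun hs ht hr,
    Dtfun_mul_subset_Dfun (s := 1) (fun _ => show (0 : SignType) ≤ 1 by decide) ht ?_⟩
  rwa [mul_one]

end SignFunctions

theorem statement_19_general {X : Type u} (G : Set (X → SignType))
    (h0 : (fun _ => (0 : SignType)) ∈ G)
    (hneg1 : (fun _ => (-1 : SignType)) ∈ G)
    (hmul : ∀ {a b : X → SignType}, a ∈ G → b ∈ G → (fun x => a x * b x) ∈ G) :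
    ((∀ a b c p q : X → SignType, a ∈ G → b ∈ G → c ∈ G →
        q ∈ Dfun G b c → p ∈ Dfun G a q → ∃ r ∈ Dfun G a b, p ∈ Dfun G r c) ∧
     (∀ a b : X → SignType, a ∈ G → b ∈ G → (Dtfun G a b).Nonempty)) ↔
    (∀ a b c p q : X → SignType, a ∈ G → b ∈ G → c ∈ G →
        q ∈ Dtfun G b c → p ∈ Dtfun G a q → ∃ r ∈ Dtfun G a b, p ∈ Dtfun G r c) := by
  have hneg : ∀ {a : X → SignType}, a ∈ G → -a ∈ G := neg_mem hneg1 hmul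
  exact ⟨fun h => dtAssoc_of_dAssoc h.1 h.2 hmul hneg,
    fun h => ⟨dAssoc_of_dtAssoc h hmul, dtNonempty_of_dtAssoc h h0 hneg⟩⟩

/-- Under AX1 (for `G` a submonoid of `{−1,0,1}^X` containing the
constants and separating points of the nonempty set `X`), the conjunction of AX3a
and AX3b is equivalent to AX3 (strong associativity). -/
theorem statement_19 {X : Type u} (G : Set (X → SignType)) (hX : Nonempty X)
    (h1 : (fun _ => (1 : SignType)) ∈ G)
    (h0 : (fun _ => (0 : SignType)) ∈ G)
    (hneg1 : (fun _ => (-1 : SignType)) ∈ G)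
    (hmul : ∀ {a b : X → SignType}, a ∈ G → b ∈ G → (fun x => a x * b x) ∈ G)
    (hsep : ∀ x y : X, x ≠ y → ∃ a ∈ G, a x ≠ a y) :
    ((∀ a b c p q : X → SignType, a ∈ G → b ∈ G → c ∈ G →
        q ∈ Dfun G b c → p ∈ Dfun G a q → ∃ r ∈ Dfun G a b, p ∈ Dfun G r c) ∧
     (∀ a b : X → SignType, a ∈ G → b ∈ G → (Dtfun G a b).Nonempty)) ↔
    (∀ a b c p q : X → SignType, a ∈ G → b ∈ G → c ∈ G →
        q ∈ Dtfun G b c → p ∈ Dtfun G a q → ∃ r ∈ Dtfun G a b, p ∈ Dtfun G r c) :=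
  statement_19_general G h0 hneg1 hmul
end
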